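/- Let N_A, N_B be positive integers with N_B even, let H_A = (ℂ²)^{⊗N_A} and H_B = (ℂ²)^{⊗N_B}, and let |Ψ⟩ be a unit vector in H_A ⊗ H_B. With the N_B-tangle τ_{N_B} as seed measure, the localizable multipartite entanglement and the multipartite entanglement of assistance satisfy L^τ(|Ψ⟩) ≤ L_global^τ(|Ψ⟩), and L_global^τ(|Ψ⟩) = F(Ψ_B, Ψ̃_B). -/

import Mathlib

open scoped BigOperators ComplexConjugate ComplexOrder

noncomputable section

namespace QIpaper

/-- Inner product `⟨ψ|φ⟩`, conjugate-linear in the first argument. -/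
def braket {I : Type*} [Fintype I] (ψ φ : I → ℂ) : ℂ := ∑ x, conj (ψ x) * φ x

/-- Outer product `|ψ⟩⟨ψ|`. -/
def dm {I : Type*} (ψ : I → ℂ) : Matrix I I ℂ := Matrix.of fun x y => ψ x * conj (ψ y)

open Classical in
/-- Positive semidefinite square root (junk value `0` on non-PSD matrices). -/
def psdSqrt {I : Type*} [Fintype I] [DecidableEq I] (A : Matrix I I ℂ) : Matrix I I ℂ :=
  if h : A.PosSemidef then
    (h.1.eigenvectorUnitary : Matrix I I ℂ) *
      Matrix.diagonal ((↑) ∘ (√·) ∘ h.1.eigenvalues) *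
      (star h.1.eigenvectorUnitary : Matrix I I ℂ)
  else 0

/-- The trace norm `‖A‖₁ = tr √(AᴴA)`. -/
def traceNorm {I : Type*} [Fintype I] [DecidableEq I] (A : Matrix I I ℂ) : ℝ :=
  (psdSqrt (A.conjTranspose * A)).trace.re

/-- Fidelity `F(ρ,σ) = tr √(√ρ σ √ρ)`. -/
def fidelity {I : Type*} [Fintype I] [DecidableEq I] (ρ σ : Matrix I I ℂ) : ℝ :=
  (psdSqrt (psdSqrt ρ * σ * psdSqrt ρ)).trace.re

/-- Purity `tr(ρ²)`. -/
def purity {I : Type*} [Fintype I] (ρ : Matrix I I ℂ) : ℝ := ((ρ * ρ).trace).re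

def sigmaX : Matrix (Fin 2) (Fin 2) ℂ := !![0, 1; 1, 0]
def sigmaY : Matrix (Fin 2) (Fin 2) ℂ := !![0, -Complex.I; Complex.I, 0]
def sigmaZ : Matrix (Fin 2) (Fin 2) ℂ := !![1, 0; 0, -1]

/-- `σ_y^{⊗I}` on the qubits indexed by `I`. -/
def sigmaYn {I : Type*} [Fintype I] [DecidableEq I] : Matrix (I → Fin 2) (I → Fin 2) ℂ :=
  Matrix.of fun x y => ∏ k, sigmaY (x k) (y k)

/-- The `n`-tangle `τ(ψ) = |⟨ψ|σ_y^{⊗n}|ψ*⟩|`. -/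
def tangle {I : Type*} [Fintype I] [DecidableEq I] (ψ : (I → Fin 2) → ℂ) : ℝ :=
  ‖(∑ x, ∑ y, conj (ψ x) * sigmaYn x y * conj (ψ y))‖

/-- Entrywise complex conjugate of a matrix. -/
def conjM {I J : Type*} (ρ : Matrix I J ℂ) : Matrix I J ℂ := Matrix.of fun x y => conj (ρ x y)

/-- `ρ̃ = σ_y^{⊗n} ρ* σ_y^{⊗n}`. -/
def tildeM {I : Type*} [Fintype I] [DecidableEq I] (ρ : Matrix (I → Fin 2) (I → Fin 2) ℂ) :
    Matrix (I → Fin 2) (I → Fin 2) ℂ := sigmaYn * conjM ρ * sigmaYn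

/-- The Wootters tilde `|ψ̃⟩ = σ_y^{⊗n}|ψ*⟩`. -/
def wtilde {I : Type*} [Fintype I] [DecidableEq I] (ψ : (I → Fin 2) → ℂ) : (I → Fin 2) → ℂ :=
  sigmaYn.mulVec (fun x => conj (ψ x))

/-- Reduced density matrix of the pure state `ψ` on the qubits in `s`
(tracing out the complement). -/
def reduced {n : ℕ} (s : Finset (Fin n)) (ψ : (Fin n → Fin 2) → ℂ) :
    Matrix ({i : Fin n // i ∈ s} → Fin 2) ({i : Fin n // i ∈ s} → Fin 2) ℂ :=
  Matrix.of fun a b => ∑ c : {i : Fin n // i ∉ s} → Fin 2,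
    ψ (fun i => if h : i ∈ s then a ⟨i, h⟩ else c ⟨i, h⟩) *
    conj (ψ (fun i => if h : i ∈ s then b ⟨i, h⟩ else c ⟨i, h⟩))

/-- GME-concurrence `C_GME(ψ) = min_{∅ ⊊ γ ⊊ [n]} √(2(1 − tr ψ_γ²))`. -/
def gme {n : ℕ} (ψ : (Fin n → Fin 2) → ℂ) : ℝ :=
  sInf {r : ℝ | ∃ γ : Finset (Fin n), γ ≠ ∅ ∧ γ ≠ Finset.univ ∧
    r = Real.sqrt (2 * (1 - purity (reduced γ ψ)))}

/-- Concentratable entanglement `C(ψ; s) = 1 − 2^{−|s|} Σ_{γ⊆s} tr(ψ_γ²)`. -/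
def CE {n : ℕ} (ψ : (Fin n → Fin 2) → ℂ) (s : Finset (Fin n)) : ℝ :=
  1 - (1 / 2 ^ s.card) * ∑ γ ∈ s.powerset, purity (reduced γ ψ)

/-- The subnormalized post-measurement vector `(⟨v|⊗I)|Ψ⟩`. -/
def contract {IA IB : Type*} [Fintype IA] (v : IA → ℂ) (Ψ : IA × IB → ℂ) : IB → ℂ :=
  fun y => ∑ x, conj (v x) * Ψ (x, y)

/-- Probability `p_v = ⟨Ψ|(|v⟩⟨v| ⊗ I)|Ψ⟩` of outcome `v`. -/
def prob {IA IB : Type*} [Fintype IA] [Fintype IB] (v : IA → ℂ) (Ψ : IA × IB → ℂ) : ℝ :=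
  (braket (contract v Ψ) (contract v Ψ)).re

/-- Normalized post-measurement state (the zero vector when the probability vanishes). -/
def postState {IA IB : Type*} [Fintype IA] [Fintype IB] (v : IA → ℂ) (Ψ : IA × IB → ℂ) :
    IB → ℂ := fun y => ((Real.sqrt (prob v Ψ) : ℂ))⁻¹ * contract v Ψ y

/-- `b` is an orthonormal family. (An orthonormal family indexed by the space's own
index type is an orthonormal basis.) -/
def ONB {J I : Type*} [Fintype I] [DecidableEq J] (b : J → I → ℂ) : Prop :=
  ∀ i j, braket (b i) (b j) = if i = j then 1 else 0

/-- Average post-measurement entanglement `Ē_β(Ψ) = Σ_i p_i E(φ_i)`. -/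
def avgE {ι IA IB : Type*} [Fintype ι] [Fintype IA] [Fintype IB]
    (E : (IB → ℂ) → ℝ) (b : ι → IA → ℂ) (Ψ : IA × IB → ℂ) : ℝ :=
  ∑ i, prob (b i) Ψ * E (postState (b i) Ψ)

/-- Multipartite entanglement of assistance: supremum of `Ē_β` over all
orthonormal bases `β` of `H_A`. -/
def Lglobal {IA IB : Type*} [Fintype IA] [Fintype IB] [DecidableEq IA]
    (E : (IB → ℂ) → ℝ) (Ψ : IA × IB → ℂ) : ℝ :=
  sSup {r : ℝ | ∃ b : IA → IA → ℂ, ONB b ∧ r = avgE E b Ψ}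

/-- Tensor-product basis of `(ℂ²)^{⊗K}` built from single-qubit bases. -/
def productBasis {K : Type*} [Fintype K] (q : K → Fin 2 → Fin 2 → ℂ) :
    (K → Fin 2) → (K → Fin 2) → ℂ :=
  fun i x => ∏ k, q k (i k) (x k)

/-- Localizable multipartite entanglement: supremum of `Ē_β` over product bases of
single-qubit orthonormal bases of `H_A = (ℂ²)^{⊗K}`. -/
def Lloc {K IB : Type*} [Fintype K] [DecidableEq K] [Fintype IB]
    (E : (IB → ℂ) → ℝ) (Ψ : (K → Fin 2) × IB → ℂ) : ℝ :=
  sSup {r : ℝ | ∃ q : K → Fin 2 → Fin 2 → ℂ, (∀ k, ONB (q k)) ∧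
    r = avgE E (productBasis q) Ψ}

/-- Partial trace over the `A` system of `|Ψ⟩⟨Ψ|`. -/
def ptraceA {IA IB : Type*} [Fintype IA] (Ψ : IA × IB → ℂ) : Matrix IB IB ℂ :=
  Matrix.of fun y y' => ∑ x, Ψ (x, y) * conj (Ψ (x, y'))

/-- Reduced density matrix of `|Ψ⟩⟨Ψ|` on the subset `s` of the `B` qubits. -/
def reducedB {IA : Type*} [Fintype IA] {n : ℕ} (s : Finset (Fin n))
    (Ψ : IA × (Fin n → Fin 2) → ℂ) :
    Matrix ({i : Fin n // i ∈ s} → Fin 2) ({i : Fin n // i ∈ s} → Fin 2) ℂ :=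
  Matrix.of fun a b => ∑ x : IA, ∑ c : {i : Fin n // i ∉ s} → Fin 2,
    Ψ (x, fun i => if h : i ∈ s then a ⟨i, h⟩ else c ⟨i, h⟩) *
    conj (Ψ (x, fun i => if h : i ∈ s then b ⟨i, h⟩ else c ⟨i, h⟩))

/-! ### Auxiliary lemmas -/

open Matrix
set_option linter.unusedSectionVars false
set_option maxHeartbeats 1000000

section SqrtCompat

open scoped MatrixOrder

variable {J : Type*} [Fintype J] [DecidableEq J]

/-- The positive semidefinite square root, via the continuous functional calculus. -/
def _root_.Matrix.PosSemidef.sqrt {A : Matrix J J ℂ} (_h : A.PosSemidef) : Matrix J J ℂ :=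
  CFC.sqrt A

lemma _root_.Matrix.PosSemidef.posSemidef_sqrt {A : Matrix J J ℂ} (h : A.PosSemidef) :
    h.sqrt.PosSemidef :=
  (CFC.sqrt_nonneg A).posSemidef

lemma _root_.Matrix.PosSemidef.sqrt_mul_self {A : Matrix J J ℂ} (h : A.PosSemidef) :
    h.sqrt * h.sqrt = A :=
  CFC.sqrt_mul_sqrt_self A h.nonneg

lemma _root_.Matrix.PosSemidef.eq_sqrt_of_sq_eq {A B : Matrix J J ℂ} (hB : B.PosSemidef)
    (hA : A.PosSemidef) (h : B ^ 2 = A) : B = hA.sqrt :=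
  (CFC.sqrt_unique (by rw [← sq]; exact h) hB.nonneg).symm

lemma psdSqrt_eq_sqrt {A : Matrix J J ℂ} (h : A.PosSemidef) : psdSqrt A = h.sqrt := by
  rw [psdSqrt, dif_pos h, Matrix.PosSemidef.sqrt, CFC.sqrt_eq_cfc,
    cfc_nnreal_eq_real _ A h.nonneg, h.1.cfc_eq, Matrix.IsHermitian.cfc,
    Unitary.conjStarAlgAut_apply]
  congr 3
  funext j
  simp [Real.coe_sqrt, h.eigenvalues_nonneg j]

end SqrtCompat
section BraketBasics

variable {I : Type*} [Fintype I]

lemma braket_star_star (x y : I → ℂ) : braket (star x) (star y) = conj (braket x y) := by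
  simp only [braket, map_sum, _root_.map_mul, Pi.star_apply, Complex.conj_conj, RingHom.coe_comp]
  simp [mul_comm]

lemma braket_self_eq_normSq (x : I → ℂ) :
    braket x x = ((∑ i, Complex.normSq (x i) : ℝ) : ℂ) := by
  simp [braket, Complex.normSq_eq_conj_mul_self]

lemma braket_self_nonneg (x : I → ℂ) : 0 ≤ (braket x x).re := by
  rw [braket_self_eq_normSq, Complex.ofReal_re]
  exact Finset.sum_nonneg fun i _ => Complex.normSq_nonneg _

lemma contract_eq_zero_of_prob_eq_zero {IA IB : Type*} [Fintype IA] [Fintype IB]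
    {v : IA → ℂ} {Ψ : IA × IB → ℂ} (h : prob v Ψ = 0) : contract v Ψ = 0 := by
  have h2 : ∑ y, Complex.normSq (contract v Ψ y) = 0 := by
    have h' := h
    rw [prob, braket_self_eq_normSq] at h'
    simpa using h'
  funext y
  have hy : Complex.normSq (contract v Ψ y) = 0 :=
    (Finset.sum_eq_zero_iff_of_nonneg (fun i _ => Complex.normSq_nonneg _)).mp h2 y
      (Finset.mem_univ y)
  simpa using Complex.normSq_eq_zero.mp hy

end BraketBasics
section SigmaY

lemma sigmaY_apply_symm (a b : Fin 2) : sigmaY b a = -sigmaY a b := by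
  fin_cases a <;> fin_cases b <;> simp [sigmaY]

lemma sigmaY_conj (a b : Fin 2) : conj (sigmaY a b) = sigmaY b a := by
  fin_cases a <;> fin_cases b <;> simp [sigmaY]

variable {I : Type*} [Fintype I] [DecidableEq I]

lemma sigmaYn_conj (x y : I → Fin 2) : conj (sigmaYn x y : ℂ) = sigmaYn y x := by
  simp only [sigmaYn, Matrix.of_apply, map_prod]
  exact Finset.prod_congr rfl fun k _ => sigmaY_conj _ _

lemma sigmaYn_symm (h : Even (Fintype.card I)) (x y : I → Fin 2) :
    (sigmaYn y x : ℂ) = sigmaYn x y := by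
  simp only [sigmaYn, Matrix.of_apply]
  calc ∏ k, sigmaY (y k) (x k) = ∏ k, (-1) * sigmaY (x k) (y k) := by
        refine Finset.prod_congr rfl fun k _ => by rw [sigmaY_apply_symm]; ring
      _ = (-1) ^ (Fintype.card I) * ∏ k, sigmaY (x k) (y k) := by
        rw [Finset.prod_mul_distrib]; simp [Finset.prod_const, Finset.card_univ]
      _ = _ := by rw [h.neg_one_pow]; ring

lemma sigmaYn_conjTranspose : (sigmaYn (I := I))ᴴ = sigmaYn := by
  ext x y
  rw [Matrix.conjTranspose_apply]
  exact sigmaYn_conj y x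

end SigmaY
section MmatSection

variable {IA : Type*} [Fintype IA] [DecidableEq IA] {n : Type*} [Fintype n] [DecidableEq n]

/-- The matrix `A0` with `A0 y a = Ψ (a, y)`. -/
def Amat (Ψ : IA × (n → Fin 2) → ℂ) : Matrix (n → Fin 2) IA ℂ :=
  Matrix.of fun y a => Ψ (a, y)

/-- The symmetric matrix `M` with `M a a' = ∑ conj Ψ(a,x) S x y conj Ψ(a',y)`. -/
def Mmat (Ψ : IA × (n → Fin 2) → ℂ) : Matrix IA IA ℂ :=
  (Amat Ψ)ᴴ * sigmaYn (I := n) * conjM (Amat Ψ)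

lemma Mmat_apply (Ψ : IA × (n → Fin 2) → ℂ) (a a' : IA) :
    Mmat Ψ a a' = ∑ x, ∑ y, conj (Ψ (a, x)) * sigmaYn x y * conj (Ψ (a', y)) := by
  simp only [Mmat, Matrix.mul_apply, Matrix.conjTranspose_apply, conjM, Amat, Matrix.of_apply,
    Finset.sum_mul, Complex.star_def]
  rw [Finset.sum_comm]

lemma ptraceA_eq_Amat (Ψ : IA × (n → Fin 2) → ℂ) : ptraceA Ψ = Amat Ψ * (Amat Ψ)ᴴ := by
  ext y y'
  simp [ptraceA, Amat, Matrix.mul_apply, Complex.star_def]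

lemma conjM_Amat_conjTranspose (Ψ : IA × (n → Fin 2) → ℂ) :
    (conjM (Amat Ψ))ᴴ = (Amat Ψ)ᵀ := by
  ext a y
  simp [conjM, Amat, Matrix.conjTranspose_apply, Complex.star_def]

lemma conjM_Amat_mul (Ψ : IA × (n → Fin 2) → ℂ) :
    conjM (Amat Ψ) * (Amat Ψ)ᵀ = conjM (ptraceA Ψ) := by
  ext y y'
  simp [conjM, Amat, ptraceA, Matrix.mul_apply, map_sum]

lemma conjM_ptraceA_posSemidef (Ψ : IA × (n → Fin 2) → ℂ) :
    (conjM (ptraceA Ψ)).PosSemidef := by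
  rw [← conjM_Amat_mul, ← conjM_Amat_conjTranspose]
  exact Matrix.posSemidef_self_mul_conjTranspose _

lemma tildeM_posSemidef {ρ : Matrix (n → Fin 2) (n → Fin 2) ℂ} (h : (conjM ρ).PosSemidef) :
    (tildeM ρ).PosSemidef := by
  have : tildeM ρ = sigmaYn * conjM ρ * (sigmaYn)ᴴ := by rw [sigmaYn_conjTranspose]; rfl
  rw [this]
  exact h.mul_mul_conjTranspose_same _

lemma Mmat_transpose (h : Even (Fintype.card n)) (Ψ : IA × (n → Fin 2) → ℂ) :
    (Mmat Ψ)ᵀ = Mmat Ψ := by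
  ext a a'
  rw [Matrix.transpose_apply, Mmat_apply, Mmat_apply, Finset.sum_comm]
  refine Finset.sum_congr rfl fun x _ => Finset.sum_congr rfl fun y _ => ?_
  rw [sigmaYn_symm h y x]
  ring

lemma Mmat_mul_conjTranspose (Ψ : IA × (n → Fin 2) → ℂ) :
    Mmat Ψ * (Mmat Ψ)ᴴ = (Amat Ψ)ᴴ * tildeM (ptraceA Ψ) * Amat Ψ := by
  have h1 : (Mmat Ψ)ᴴ = (Amat Ψ)ᵀ * sigmaYn (I := n) * Amat Ψ := by
    simp only [Mmat, Matrix.conjTranspose_mul, conjM_Amat_conjTranspose, sigmaYn_conjTranspose,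
      Matrix.conjTranspose_conjTranspose, Matrix.mul_assoc]
  rw [h1, Mmat, tildeM]
  simp only [Matrix.mul_assoc, ← conjM_Amat_mul (Ψ := Ψ)]

end MmatSection
section TangleSection

variable {IA : Type*} [Fintype IA] [DecidableEq IA] {n : Type*} [Fintype n] [DecidableEq n]

lemma sum_swap_mid {α β γ : Type*} [Fintype α] [Fintype β] [AddCommMonoid γ]
    (f : α → α → β → β → γ) :
    ∑ x : β, ∑ y : β, ∑ a : α, ∑ b : α, f a b x y
      = ∑ a : α, ∑ b : α, ∑ x : β, ∑ y : β, f a b x y := by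
  calc ∑ x : β, ∑ y : β, ∑ a : α, ∑ b : α, f a b x y
      = ∑ x : β, ∑ a : α, ∑ y : β, ∑ b : α, f a b x y :=
        Finset.sum_congr rfl fun x _ => Finset.sum_comm
    _ = ∑ a : α, ∑ x : β, ∑ y : β, ∑ b : α, f a b x y := Finset.sum_comm
    _ = ∑ a : α, ∑ x : β, ∑ b : α, ∑ y : β, f a b x y :=
        Finset.sum_congr rfl fun a _ => Finset.sum_congr rfl fun x _ => Finset.sum_comm
    _ = ∑ a : α, ∑ b : α, ∑ x : β, ∑ y : β, f a b x y :=
        Finset.sum_congr rfl fun a _ => Finset.sum_comm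

lemma tangle_const_mul (c : ℂ) (ψ : (n → Fin 2) → ℂ) :
    tangle (fun x => c * ψ x) = ‖c‖ ^ 2 * tangle ψ := by
  unfold tangle
  have h : (∑ x, ∑ y, conj (c * ψ x) * sigmaYn x y * conj (c * ψ y))
      = conj c ^ 2 * ∑ x, ∑ y, conj (ψ x) * sigmaYn x y * conj (ψ y) := by
    rw [Finset.mul_sum]
    refine Finset.sum_congr rfl fun x _ => ?_
    rw [Finset.mul_sum]
    refine Finset.sum_congr rfl fun y _ => ?_
    simp only [_root_.map_mul]
    ring
  rw [h, norm_mul, norm_pow, Complex.norm_conj]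

lemma tangle_contract_eq (Ψ : IA × (n → Fin 2) → ℂ) (v : IA → ℂ) :
    tangle (contract v Ψ) = ‖(∑ a, ∑ a', v a * v a' * Mmat Ψ a a')‖ := by
  unfold tangle
  congr 1
  have hconj : ∀ x, conj (contract v Ψ x) = ∑ a, v a * conj (Ψ (a, x)) := by
    intro x
    simp [contract, map_sum]
  calc ∑ x, ∑ y, conj (contract v Ψ x) * sigmaYn x y * conj (contract v Ψ y)
      = ∑ x, ∑ y, ∑ a, ∑ a', v a * v a' *
          (conj (Ψ (a, x)) * sigmaYn x y * conj (Ψ (a', y))) := by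
        refine Finset.sum_congr rfl fun x _ => Finset.sum_congr rfl fun y _ => ?_
        rw [hconj, hconj, Finset.sum_mul, Finset.sum_mul]
        refine Finset.sum_congr rfl fun a _ => ?_
        rw [Finset.mul_sum]
        refine Finset.sum_congr rfl fun a' _ => ?_
        ring
    _ = ∑ a, ∑ a', ∑ x, ∑ y, v a * v a' *
          (conj (Ψ (a, x)) * sigmaYn x y * conj (Ψ (a', y))) := sum_swap_mid _
    _ = ∑ a, ∑ a', v a * v a' * Mmat Ψ a a' := by
        refine Finset.sum_congr rfl fun a _ => Finset.sum_congr rfl fun a' _ => ?_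
        rw [Mmat_apply, Finset.mul_sum]
        refine Finset.sum_congr rfl fun x _ => ?_
        rw [Finset.mul_sum]

lemma prob_mul_tangle_postState (Ψ : IA × (n → Fin 2) → ℂ) (v : IA → ℂ) :
    prob v Ψ * tangle (postState v Ψ) = tangle (contract v Ψ) := by
  by_cases hp : prob v Ψ = 0
  · have hc := contract_eq_zero_of_prob_eq_zero hp
    rw [hp, hc]
    simp [tangle, postState, hc]
  · have hp' : 0 < prob v Ψ := lt_of_le_of_ne (braket_self_nonneg _) (Ne.symm hp)
    unfold postState
    rw [tangle_const_mul]
    have habs : ‖(((Real.sqrt (prob v Ψ) : ℝ) : ℂ))⁻¹‖ ^ 2 = (prob v Ψ)⁻¹ := by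
      rw [norm_inv, Complex.norm_real, Real.norm_eq_abs, abs_of_nonneg (Real.sqrt_nonneg _),
        inv_pow, Real.sq_sqrt hp'.le]
    rw [norm_inv] at habs ⊢
    rw [inv_pow] at habs ⊢
    rw [habs]
    field_simp

lemma avgE_tangle_eq {ι : Type*} [Fintype ι] (Ψ : IA × (n → Fin 2) → ℂ) (b : ι → IA → ℂ) :
    avgE tangle b Ψ = ∑ i, ‖(∑ a, ∑ a', b i a * b i a' * Mmat Ψ a a')‖ := by
  unfold avgE
  refine Finset.sum_congr rfl fun i _ => ?_
  rw [prob_mul_tangle_postState, tangle_contract_eq]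

end TangleSection
section ONBSection

variable {I : Type*} [Fintype I] [DecidableEq I]

lemma onb_rows_mul {b : I → I → ℂ} (hb : ONB b) :
    (Matrix.of fun i a => b i a) * (Matrix.of fun i a => b i a)ᴴ = 1 := by
  ext i j
  simp only [Matrix.mul_apply, Matrix.conjTranspose_apply, Matrix.of_apply, Complex.star_def]
  have h2 : ∑ a, b i a * conj (b j a) = conj (braket (b i) (b j)) := by
    simp [braket, map_sum, mul_comm]
  rw [h2, hb i j]
  by_cases h : i = j <;> simp [h, Matrix.one_apply]

lemma onb_cols {b : I → I → ℂ} (hb : ONB b) (a a' : I) :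
    ∑ i, conj (b i a) * b i a' = if a = a' then 1 else 0 := by
  have h2 : (Matrix.of fun i a => b i a)ᴴ * (Matrix.of fun i a => b i a) = 1 :=
    mul_eq_one_comm.mp (onb_rows_mul hb)
  have h3 := congrFun (congrFun h2 a) a'
  simpa [Matrix.mul_apply, Matrix.conjTranspose_apply, Complex.star_def,
    Matrix.one_apply] using h3

lemma onb_parseval {b : I → I → ℂ} (hb : ONB b) {w : I → ℂ} (hw : braket w w = 1) :
    ∑ i, conj (∑ a, b i a * w a) * (∑ a, b i a * w a) = 1 := by
  calc ∑ i, conj (∑ a, b i a * w a) * (∑ a, b i a * w a)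
      = ∑ i, ∑ a, ∑ a', (conj (b i a) * b i a') * (conj (w a) * w a') := by
        refine Finset.sum_congr rfl fun i _ => ?_
        rw [map_sum, Finset.sum_mul]
        refine Finset.sum_congr rfl fun a _ => ?_
        rw [Finset.mul_sum]
        refine Finset.sum_congr rfl fun a' _ => ?_
        rw [_root_.map_mul]
        ring
    _ = ∑ a, ∑ a', (∑ i, conj (b i a) * b i a') * (conj (w a) * w a') := by
        rw [Finset.sum_comm]
        refine Finset.sum_congr rfl fun a _ => ?_
        rw [Finset.sum_comm]
        refine Finset.sum_congr rfl fun a' _ => ?_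
        rw [Finset.sum_mul]
    _ = ∑ a, conj (w a) * w a := by
        refine Finset.sum_congr rfl fun a _ => ?_
        simp only [onb_cols hb, ite_mul, one_mul, zero_mul]
        rw [Finset.sum_ite_eq]
        simp
    _ = 1 := hw

lemma onb_star {b : I → I → ℂ} (hb : ONB b) : ONB (fun i => star (b i)) := by
  intro i j
  rw [braket_star_star, hb i j]
  by_cases h : i = j <;> simp [h]

lemma onb_product {K : Type*} [Fintype K] [DecidableEq K] (q : K → Fin 2 → Fin 2 → ℂ)
    (hq : ∀ k, ONB (q k)) : ONB (productBasis q) := by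
  intro i j
  unfold productBasis braket
  calc ∑ x : K → Fin 2, conj (∏ k, q k (i k) (x k)) * ∏ k, q k (j k) (x k)
      = ∑ x : K → Fin 2, ∏ k, (conj (q k (i k) (x k)) * q k (j k) (x k)) := by
        refine Finset.sum_congr rfl fun x _ => ?_
        rw [map_prod, ← Finset.prod_mul_distrib]
    _ = ∏ k, ∑ t : Fin 2, conj (q k (i k) t) * q k (j k) t := by
        rw [Finset.prod_univ_sum]
        rw [Fintype.piFinset_univ]
    _ = ∏ k, (if i k = j k then (1:ℂ) else 0) :=
        Finset.prod_congr rfl fun k _ => hq k (i k) (j k)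
    _ = if i = j then 1 else 0 := by
        by_cases h : i = j
        · simp [h]
        · obtain ⟨k, hk⟩ : ∃ k, i k ≠ j k := by
            by_contra hc; push_neg at hc; exact h (funext hc)
          rw [if_neg h]
          exact Finset.prod_eq_zero (Finset.mem_univ k) (by simp [hk])

lemma onb_std : ONB (fun (i : Fin 2) (x : Fin 2) => if i = x then (1:ℂ) else 0) := by
  intro i j
  unfold braket
  fin_cases i <;> fin_cases j <;> simp [Fin.sum_univ_two]

end ONBSection
section SpectralSection

variable {J : Type*} [Fintype J] [DecidableEq J] {K : Type*} [Fintype K] [DecidableEq K]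

lemma psdSqrt_of_posSemidef {A : Matrix J J ℂ} (h : A.PosSemidef) : psdSqrt A = h.sqrt :=
  psdSqrt_eq_sqrt h

lemma trace_unitary_conj_diagonal {U : Matrix J J ℂ} (hU : U ∈ Matrix.unitaryGroup J ℂ)
    (f : J → ℂ) : (U * Matrix.diagonal f * Uᴴ).trace = ∑ j, f j := by
  rw [Matrix.trace_mul_cycle]
  have h1 : Uᴴ * U = 1 := by
    rw [← Matrix.star_eq_conjTranspose]
    exact Matrix.mem_unitaryGroup_iff'.mp hU
  rw [h1, Matrix.one_mul, Matrix.trace_diagonal]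

lemma trace_psdSqrt_of_posSemidef {A : Matrix J J ℂ} (h : A.PosSemidef) :
    (psdSqrt A).trace = ∑ j, (Real.sqrt (h.1.eigenvalues j) : ℂ) := by
  set U : Matrix J J ℂ := (h.1.eigenvectorUnitary : Matrix J J ℂ) with hUdef
  have hUmem : U ∈ Matrix.unitaryGroup J ℂ := (h.1.eigenvectorUnitary).2
  have hUU : Uᴴ * U = 1 := by
    rw [← Matrix.star_eq_conjTranspose]
    exact Matrix.mem_unitaryGroup_iff'.mp hUmem
  set B : Matrix J J ℂ :=
    U * Matrix.diagonal (fun j => (Real.sqrt (h.1.eigenvalues j) : ℂ)) * Uᴴ with hBdef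
  have hBpsd : B.PosSemidef := by
    apply Matrix.PosSemidef.mul_mul_conjTranspose_same
    refine Matrix.posSemidef_diagonal_iff.mpr fun j => ?_
    rw [Complex.zero_le_real]
    exact Real.sqrt_nonneg _
  have hBsq : B ^ 2 = A := by
    rw [pow_two, hBdef]
    have : (U * Matrix.diagonal (fun j => (Real.sqrt (h.1.eigenvalues j) : ℂ)) * Uᴴ) *
        (U * Matrix.diagonal (fun j => (Real.sqrt (h.1.eigenvalues j) : ℂ)) * Uᴴ)
        = U * (Matrix.diagonal (fun j => (Real.sqrt (h.1.eigenvalues j) : ℂ)) *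
            Matrix.diagonal (fun j => (Real.sqrt (h.1.eigenvalues j) : ℂ))) * Uᴴ := by
      calc (U * Matrix.diagonal (fun j => (Real.sqrt (h.1.eigenvalues j) : ℂ)) * Uᴴ) *
          (U * Matrix.diagonal (fun j => (Real.sqrt (h.1.eigenvalues j) : ℂ)) * Uᴴ)
          = U * Matrix.diagonal (fun j => (Real.sqrt (h.1.eigenvalues j) : ℂ)) * (Uᴴ * U) *
            Matrix.diagonal (fun j => (Real.sqrt (h.1.eigenvalues j) : ℂ)) * Uᴴ := by
            simp only [Matrix.mul_assoc]
        _ = _ := by rw [hUU]; simp only [Matrix.mul_one, Matrix.mul_assoc]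
    rw [this, Matrix.diagonal_mul_diagonal]
    have hd : (fun j => (Real.sqrt (h.1.eigenvalues j) : ℂ) * (Real.sqrt (h.1.eigenvalues j) : ℂ))
        = fun j => ((h.1.eigenvalues j : ℝ) : ℂ) := by
      funext j
      rw [← Complex.ofReal_mul, Real.mul_self_sqrt (h.eigenvalues_nonneg j)]
    rw [hd]
    conv_rhs => rw [h.1.spectral_theorem]
    rw [Unitary.conjStarAlgAut_apply, Matrix.star_eq_conjTranspose]
    rfl
  have hB : B = h.sqrt := hBpsd.eq_sqrt_of_sq_eq h hBsq
  rw [psdSqrt_of_posSemidef h, ← hB, hBdef, trace_unitary_conj_diagonal hUmem]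

lemma trace_psdSqrt_comm (A : Matrix J K ℂ) :
    (psdSqrt (Aᴴ * A)).trace = (psdSqrt (A * Aᴴ)).trace := by
  have hP : (Aᴴ * A).PosSemidef := Matrix.posSemidef_conjTranspose_mul_self A
  have hQ : (A * Aᴴ).PosSemidef := Matrix.posSemidef_self_mul_conjTranspose A
  set lam : K → ℝ := hP.1.eigenvalues with hlam
  have hlam0 : ∀ j, 0 ≤ lam j := hP.eigenvalues_nonneg
  set U : Matrix K K ℂ := (hP.1.eigenvectorUnitary : Matrix K K ℂ) with hUdef
  have hUmem : U ∈ Matrix.unitaryGroup K ℂ := (hP.1.eigenvectorUnitary).2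
  have hUU : Uᴴ * U = 1 := by
    rw [← Matrix.star_eq_conjTranspose]; exact Matrix.mem_unitaryGroup_iff'.mp hUmem
  have hUU' : U * Uᴴ = 1 := by
    rw [← Matrix.star_eq_conjTranspose]; exact Matrix.mem_unitaryGroup_iff.mp hUmem
  set K0 : Matrix J K ℂ := A * U with hK0def
  have hK : K0ᴴ * K0 = Matrix.diagonal (fun j => ((lam j : ℝ) : ℂ)) := by
    have hsp := hP.1.spectral_theorem
    rw [Unitary.conjStarAlgAut_apply, Matrix.star_eq_conjTranspose] at hsp
    have : K0ᴴ * K0 = Uᴴ * (Aᴴ * A) * U := by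
      rw [hK0def, Matrix.conjTranspose_mul]
      simp only [Matrix.mul_assoc]
    rw [this, hsp]
    calc Uᴴ * (U * Matrix.diagonal (RCLike.ofReal ∘ hP.1.eigenvalues) * Uᴴ) * U
        = (Uᴴ * U) * Matrix.diagonal (RCLike.ofReal ∘ hP.1.eigenvalues) * (Uᴴ * U) := by
          simp only [Matrix.mul_assoc]
      _ = Matrix.diagonal (fun j => ((lam j : ℝ) : ℂ)) := by
          rw [hUU]; simp only [Matrix.one_mul, Matrix.mul_one]; rfl
  have hcol : ∀ j, ¬ (0 < lam j) → ∀ i, K0 i j = 0 := by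
    intro j hj i
    have hlz : lam j = 0 := le_antisymm (not_lt.mp hj) (hlam0 j)
    have hjj := congrFun (congrFun hK j) j
    simp only [Matrix.mul_apply, Matrix.conjTranspose_apply, Complex.star_def,
      Matrix.diagonal_apply_eq, hlz, Complex.ofReal_zero] at hjj
    have hjj' : ∑ i, (Complex.normSq (K0 i j) : ℂ) = 0 := by
      rw [← hjj]
      exact Finset.sum_congr rfl fun i _ => Complex.normSq_eq_conj_mul_self
    have hjj'' : ∑ i, Complex.normSq (K0 i j) = 0 := by exact_mod_cast hjj'
    have := (Finset.sum_eq_zero_iff_of_nonneg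
      (fun i _ => Complex.normSq_nonneg (K0 i j))).mp hjj'' i (Finset.mem_univ i)
    exact Complex.normSq_eq_zero.mp this
  set g : K → ℝ := fun j => if 0 < lam j then (Real.sqrt (lam j))⁻¹ else 0 with hgdef
  have hgnn : ∀ j, 0 ≤ g j := by
    intro j; rw [hgdef]; dsimp only
    split
    · exact inv_nonneg.mpr (Real.sqrt_nonneg _)
    · exact le_refl 0
  set G : Matrix K K ℂ := Matrix.diagonal (fun j => ((g j : ℝ) : ℂ)) with hGdef
  set B : Matrix J J ℂ := K0 * G * K0ᴴ with hBdef
  have hdg : (Matrix.diagonal fun j => ((Real.sqrt (g j) : ℝ) : ℂ))ᴴ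
      = Matrix.diagonal fun j => ((Real.sqrt (g j) : ℝ) : ℂ) := by
    rw [Matrix.diagonal_conjTranspose]
    have : (star fun j => ((Real.sqrt (g j) : ℝ) : ℂ)) = fun j => ((Real.sqrt (g j) : ℝ) : ℂ) := by
      funext j; simp [Pi.star_apply, Complex.star_def, Complex.conj_ofReal]
    rw [this]
  have hdd : (Matrix.diagonal fun j => ((Real.sqrt (g j) : ℝ) : ℂ)) *
      (Matrix.diagonal fun j => ((Real.sqrt (g j) : ℝ) : ℂ))
      = Matrix.diagonal fun j => ((g j : ℝ) : ℂ) := by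
    rw [Matrix.diagonal_mul_diagonal]
    have : (fun j => ((Real.sqrt (g j) : ℝ) : ℂ) * ((Real.sqrt (g j) : ℝ) : ℂ))
        = fun j => ((g j : ℝ) : ℂ) := by
      funext j; rw [← Complex.ofReal_mul, Real.mul_self_sqrt (hgnn j)]
    rw [this]
  have hBpsd : B.PosSemidef := by
    have hBC : B = (K0 * Matrix.diagonal fun j => ((Real.sqrt (g j) : ℝ) : ℂ)) *
        (K0 * Matrix.diagonal fun j => ((Real.sqrt (g j) : ℝ) : ℂ))ᴴ := by
      rw [Matrix.conjTranspose_mul, hdg, hBdef, hGdef, ← hdd]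
      simp only [Matrix.mul_assoc]
    rw [hBC]
    exact Matrix.posSemidef_self_mul_conjTranspose _
  have hBsq : B ^ 2 = A * Aᴴ := by
    have hKE : K0 * (G * Matrix.diagonal (fun j => ((lam j : ℝ) : ℂ)) * G) * K0ᴴ = K0 * K0ᴴ := by
      have hE : G * Matrix.diagonal (fun j => ((lam j : ℝ) : ℂ)) * G
          = Matrix.diagonal (fun j => if 0 < lam j then (1:ℂ) else 0) := by
        rw [hGdef, Matrix.diagonal_mul_diagonal, Matrix.diagonal_mul_diagonal]
        have : (fun i => ((g i : ℝ) : ℂ) * ((lam i : ℝ) : ℂ) * ((g i : ℝ) : ℂ))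
            = fun j => if 0 < lam j then (1:ℂ) else 0 := by
          funext j
          by_cases hj : 0 < lam j
          · simp only [hj, if_pos]
            rw [← Complex.ofReal_mul, ← Complex.ofReal_mul]
            have hreal : g j * lam j * g j = 1 := by
              have hgj : g j = (Real.sqrt (lam j))⁻¹ := by rw [hgdef]; simp [hj]
              rw [hgj]
              have hs : Real.sqrt (lam j) ≠ 0 := by positivity
              rw [← Real.mul_self_sqrt (hlam0 j)]
              field_simp
              rw [Real.sqrt_sq (Real.sqrt_nonneg _)]
            rw [hreal, Complex.ofReal_one]
          · have hgj : g j = 0 := by rw [hgdef]; simp [hj]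
            simp [hj, hgj]
        rw [this]
      rw [hE]
      have hKEK : K0 * Matrix.diagonal (fun j => if 0 < lam j then (1:ℂ) else 0) = K0 := by
        ext i j
        rw [Matrix.mul_diagonal]
        by_cases hj : 0 < lam j
        · simp [hj]
        · simp [hj, hcol j hj i]
      rw [hKEK]
    have : B ^ 2 = K0 * (G * (K0ᴴ * K0) * G) * K0ᴴ := by
      rw [pow_two, hBdef]
      simp only [Matrix.mul_assoc]
    rw [this, hK, hKE, hK0def, Matrix.conjTranspose_mul]
    calc A * U * (Uᴴ * Aᴴ) = A * (U * Uᴴ) * Aᴴ := by simp only [Matrix.mul_assoc]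
      _ = A * Aᴴ := by rw [hUU']; simp only [Matrix.mul_one, Matrix.one_mul, Matrix.mul_assoc]
  have hBtr : B.trace = ∑ j, (Real.sqrt (lam j) : ℂ) := by
    rw [hBdef, Matrix.trace_mul_cycle, hK, Matrix.diagonal_mul_diagonal, Matrix.trace_diagonal]
    refine Finset.sum_congr rfl fun j _ => ?_
    by_cases hj : 0 < lam j
    · have hgj : g j = (Real.sqrt (lam j))⁻¹ := by rw [hgdef]; simp [hj]
      rw [hgj, ← Complex.ofReal_mul]
      congr 1
      have hs : Real.sqrt (lam j) ≠ 0 := by positivity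
      rw [← Real.mul_self_sqrt (hlam0 j)]
      field_simp
      rw [Real.sqrt_sq (Real.sqrt_nonneg _)]
    · have hlz : lam j = 0 := le_antisymm (not_lt.mp hj) (hlam0 j)
      have hgj : g j = 0 := by rw [hgdef]; simp [hj]
      simp [hgj, hlz]
  have hBsqrt : B = hQ.sqrt := hBpsd.eq_sqrt_of_sq_eq hQ hBsq
  rw [psdSqrt_of_posSemidef hQ, ← hBsqrt, hBtr, trace_psdSqrt_of_posSemidef hP]

lemma trace_psdSqrt_sandwich' (A : Matrix J K ℂ) {T R : Matrix J J ℂ} (hRH : Rᴴ = R)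
    (hRT : R * R = T) :
    (psdSqrt (Aᴴ * T * A)).trace = (psdSqrt (R * (A * Aᴴ) * R)).trace := by
  have h1 : Aᴴ * T * A = (R * A)ᴴ * (R * A) := by
    rw [Matrix.conjTranspose_mul, hRH, ← hRT]
    simp only [Matrix.mul_assoc]
  have h2 : (R * A) * (R * A)ᴴ = R * (A * Aᴴ) * R := by
    rw [Matrix.conjTranspose_mul, hRH]
    simp only [Matrix.mul_assoc]
  rw [h1, trace_psdSqrt_comm (R * A), h2]

lemma trace_psdSqrt_sandwich (A : Matrix J K ℂ) {T : Matrix J J ℂ} (hT : T.PosSemidef) :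
    (psdSqrt (Aᴴ * T * A)).trace = (psdSqrt (psdSqrt T * (A * Aᴴ) * psdSqrt T)).trace := by
  rw [psdSqrt_of_posSemidef hT]
  exact trace_psdSqrt_sandwich' A hT.posSemidef_sqrt.1 hT.sqrt_mul_self

end SpectralSection
section TakagiSection

variable {I : Type*} [Fintype I] [DecidableEq I]

lemma braket_eq_inner (x y : EuclideanSpace ℂ I) :
    (inner ℂ x y : ℂ) = braket (x : I → ℂ) (y : I → ℂ) := by
  rw [PiLp.inner_apply]
  simp only [RCLike.inner_apply']
  rfl

lemma braket_comm_conj (x y : I → ℂ) : braket x y = conj (braket y x) := by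
  simp only [braket, map_sum, _root_.map_mul, Complex.conj_conj]
  exact Finset.sum_congr rfl fun i _ => mul_comm _ _

lemma braket_smul (c c' : ℂ) (x y : I → ℂ) :
    braket (c • x) (c' • y) = conj c * c' * braket x y := by
  simp only [braket, Pi.smul_apply, smul_eq_mul, _root_.map_mul, Finset.mul_sum]
  exact Finset.sum_congr rfl fun i _ => by ring

lemma star_smul_fun (c : ℂ) (x : I → ℂ) : star (c • x) = conj c • star x := by
  funext i
  simp [Pi.star_apply, Complex.star_def, Pi.smul_apply]

lemma mulVec_star_mulVec_star {M : Matrix I I ℂ} (hM : Mᵀ = M) (x : I → ℂ) :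
    M *ᵥ star (M *ᵥ star x) = (M * Mᴴ) *ᵥ x := by
  have hsym : ∀ b c, M c b = M b c := fun b c => congrFun (congrFun hM b) c
  funext a
  simp only [Matrix.mulVec, dotProduct, Pi.star_apply, Complex.star_def, map_sum,
    _root_.map_mul, Complex.conj_conj, Matrix.mul_apply, Finset.sum_mul, Finset.mul_sum,
    Matrix.conjTranspose_apply]
  rw [Finset.sum_comm]
  refine Finset.sum_congr rfl fun c _ => Finset.sum_congr rfl fun b _ => ?_
  rw [hsym b c]
  ring

lemma exists_coneig {M : Matrix I I ℂ} (hM : Mᵀ = M) (h0 : M ≠ 0) :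
    ∃ (σ : ℝ) (v : I → ℂ), 0 < σ ∧ braket v v = 1 ∧
      M *ᵥ (star v) = (σ : ℂ) • v ∧ v ∈ LinearMap.range M.mulVecLin := by
  have hP : (M * Mᴴ).PosSemidef := Matrix.posSemidef_self_mul_conjTranspose M
  -- find a positive eigenvalue
  have hex : ∃ j, hP.1.eigenvalues j ≠ 0 := by
    by_contra hc
    push_neg at hc
    have hPzero : M * Mᴴ = 0 := by
      have hsp := hP.1.spectral_theorem
      rw [Unitary.conjStarAlgAut_apply, Matrix.star_eq_conjTranspose] at hsp
      have hz : Matrix.diagonal (RCLike.ofReal ∘ hP.1.eigenvalues) = (0 : Matrix I I ℂ) := by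
        have : (RCLike.ofReal ∘ hP.1.eigenvalues : I → ℂ) = 0 := by
          funext j; simp [hc j]
        rw [this]
        exact Matrix.diagonal_zero
      rw [hsp, hz]
      simp
    apply h0
    ext a b
    have hdiag := congrFun (congrFun hPzero a) a
    simp only [Matrix.mul_apply, Matrix.conjTranspose_apply, Matrix.zero_apply,
      Complex.star_def] at hdiag
    have h2 : ∑ x, (Complex.normSq (M a x) : ℂ) = 0 := by
      rw [← hdiag]
      exact Finset.sum_congr rfl fun x _ => (Complex.mul_conj (M a x)).symm
    have h3 : ∑ x, Complex.normSq (M a x) = 0 := by exact_mod_cast h2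
    have h4 := (Finset.sum_eq_zero_iff_of_nonneg
      (fun x _ => Complex.normSq_nonneg (M a x))).mp h3 b (Finset.mem_univ b)
    simpa using Complex.normSq_eq_zero.mp h4
  obtain ⟨j, hj⟩ := hex
  have hpos : 0 < hP.1.eigenvalues j := lt_of_le_of_ne (hP.eigenvalues_nonneg j) (Ne.symm hj)
  set lam : ℝ := hP.1.eigenvalues j with hlamdef
  set σ : ℝ := Real.sqrt lam with hsdef
  have hσpos : 0 < σ := Real.sqrt_pos.mpr hpos
  have hσsq : (σ : ℂ) * (σ : ℂ) = (lam : ℂ) := by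
    rw [← Complex.ofReal_mul, Real.mul_self_sqrt hpos.le]
  set u : I → ℂ := ⇑(hP.1.eigenvectorBasis j) with hudef
  have hu : (M * Mᴴ) *ᵥ u = (lam : ℂ) • u := by
    have := hP.1.mulVec_eigenvectorBasis j
    rw [← hudef] at this
    rw [this]
    funext i
    simp [Pi.smul_apply, Complex.real_smul, hlamdef]
  have huu : braket u u = 1 := by
    have horm := orthonormal_iff_ite.mp (hP.1.eigenvectorBasis).orthonormal j j
    simp only [if_pos rfl] at horm
    rw [← braket_eq_inner]
    exact horm
  have humem : u ∈ LinearMap.range M.mulVecLin := by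
    refine ⟨((lam : ℂ))⁻¹ • (Mᴴ *ᵥ u), ?_⟩
    rw [Matrix.mulVecLin_apply, Matrix.mulVec_smul, Matrix.mulVec_mulVec, hu, smul_smul,
      inv_mul_cancel₀ (Complex.ofReal_ne_zero.mpr hj), one_smul]
  set w : I → ℂ := M *ᵥ (star u) + (σ : ℂ) • u with hwdef
  have hstarw : star w = star (M *ᵥ star u) + (σ : ℂ) • star u := by
    rw [hwdef]
    funext i
    simp [Pi.star_apply, Pi.add_apply, Pi.smul_apply, Complex.star_def, map_add,
      _root_.map_mul, Complex.conj_ofReal]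
  have hw : M *ᵥ star w = (σ : ℂ) • w := by
    rw [hstarw, Matrix.mulVec_add, Matrix.mulVec_smul, mulVec_star_mulVec_star hM, hu, hwdef,
      smul_add, smul_smul, hσsq, add_comm]
  have hwmem : w ∈ LinearMap.range M.mulVecLin := by
    rw [hwdef]
    exact Submodule.add_mem _ ⟨star u, rfl⟩ (Submodule.smul_mem _ _ humem)
  by_cases hw0 : w = 0
  · have hMu : M *ᵥ star u = -((σ : ℂ) • u) := by
      have h5 : M *ᵥ (star u) + (σ : ℂ) • u = 0 := by rw [← hwdef, hw0]
      exact eq_neg_of_add_eq_zero_left h5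
    refine ⟨σ, Complex.I • u, hσpos, ?_, ?_, Submodule.smul_mem _ _ humem⟩
    · rw [braket_smul, huu, Complex.conj_I]
      simp
    · rw [star_smul_fun, Matrix.mulVec_smul, hMu, Complex.conj_I, smul_neg, smul_smul,
        smul_smul]
      rw [← neg_smul]
      congr 1
      ring
  · set t : ℝ := (braket w w).re with htdef
    have htval : braket w w = (t : ℂ) := by
      rw [htdef, braket_self_eq_normSq, Complex.ofReal_re]
    have htnn : 0 ≤ t := braket_self_nonneg w
    have htpos : 0 < t := by
      rcases lt_or_eq_of_le htnn with h | h
      · exact h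
      · exfalso
        apply hw0
        have hz : ∑ i, Complex.normSq (w i) = 0 := by
          have := htval
          rw [braket_self_eq_normSq] at this
          have := Complex.ofReal_injective this
          rw [this, ← h]
        funext i
        have := (Finset.sum_eq_zero_iff_of_nonneg
          (fun i _ => Complex.normSq_nonneg (w i))).mp hz i (Finset.mem_univ i)
        simpa using Complex.normSq_eq_zero.mp this
    have hsrt : Real.sqrt t ≠ 0 := by positivity
    refine ⟨σ, (((Real.sqrt t)⁻¹ : ℝ) : ℂ) • w, hσpos, ?_, ?_,
      Submodule.smul_mem _ _ hwmem⟩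
    · rw [braket_smul, htval, Complex.conj_ofReal, ← Complex.ofReal_mul, ← Complex.ofReal_mul,
        Complex.ofReal_eq_one]
      rw [← Real.mul_self_sqrt htnn]
      field_simp
      rw [Real.sqrt_sq (Real.sqrt_nonneg _)]
    · rw [star_smul_fun, Matrix.mulVec_smul, hw, Complex.conj_ofReal, smul_smul, smul_smul,
        mul_comm]

end TakagiSection
section TakagiStep

variable {I : Type*} [Fintype I] [DecidableEq I]

lemma takagi_step {M : Matrix I I ℂ} (hM : Mᵀ = M) (h0 : M ≠ 0) :
    ∃ (σ : ℝ) (v : I → ℂ) (M' : Matrix I I ℂ),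
      0 < σ ∧ braket v v = 1 ∧ M'ᵀ = M' ∧
      (∀ a b, M a b = (σ : ℂ) * v a * v b + M' a b) ∧
      (∀ x, braket v (M' *ᵥ x) = 0) ∧
      LinearMap.range M'.mulVecLin ≤ LinearMap.range M.mulVecLin ∧
      Module.finrank ℂ (LinearMap.range M'.mulVecLin)
        < Module.finrank ℂ (LinearMap.range M.mulVecLin) ∧
      v ∈ LinearMap.range M.mulVecLin := by
  obtain ⟨σ, v, hσ, hvv, hMv, hvmem⟩ := exists_coneig hM h0
  set M' : Matrix I I ℂ := M - Matrix.of (fun a b => (σ : ℂ) * v a * v b) with hM'def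
  have hM'sym : M'ᵀ = M' := by
    rw [hM'def, Matrix.transpose_sub, hM]
    congr 1
    ext a b
    simp only [Matrix.transpose_apply, Matrix.of_apply]
    ring
  have hM'symm : ∀ a b, M' a b = M' b a := fun a b => congrFun (congrFun hM'sym b) a
  have hdecomp : ∀ a b, M a b = (σ : ℂ) * v a * v b + M' a b := by
    intro a b
    rw [hM'def]
    simp only [Matrix.sub_apply, Matrix.of_apply]
    ring
  have hsumv : ∑ b, v b * conj (v b) = 1 := by
    rw [← hvv]
    unfold braket
    exact Finset.sum_congr rfl fun b _ => mul_comm _ _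
  have hM'v : M' *ᵥ star v = 0 := by
    rw [hM'def, Matrix.sub_mulVec, hMv]
    funext a
    simp only [Pi.sub_apply, Matrix.mulVec, dotProduct, Matrix.of_apply, Pi.star_apply,
      Complex.star_def, Pi.smul_apply, smul_eq_mul, Pi.zero_apply]
    have hsv : ∑ b, (σ : ℂ) * v a * v b * conj (v b) = (σ : ℂ) * v a := by
      calc ∑ b, (σ : ℂ) * v a * v b * conj (v b)
          = ((σ : ℂ) * v a) * ∑ b, v b * conj (v b) := by
            rw [Finset.mul_sum]
            exact Finset.sum_congr rfl fun b _ => by ring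
        _ = (σ : ℂ) * v a := by rw [hsumv, mul_one]
    rw [hsv]
    ring
  have horth : ∀ x : I → ℂ, braket v (M' *ᵥ x) = 0 := by
    intro x
    unfold braket
    calc ∑ a, conj (v a) * (M' *ᵥ x) a
        = ∑ a, ∑ b, conj (v a) * M' a b * x b := by
          refine Finset.sum_congr rfl fun a _ => ?_
          simp only [Matrix.mulVec, dotProduct, Finset.mul_sum]
          exact Finset.sum_congr rfl fun b _ => by ring
      _ = ∑ b, (∑ a, M' b a * conj (v a)) * x b := by
          rw [Finset.sum_comm]
          refine Finset.sum_congr rfl fun b _ => ?_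
          rw [Finset.sum_mul]
          refine Finset.sum_congr rfl fun a _ => ?_
          rw [hM'symm a b]
          ring
      _ = 0 := by
          refine Finset.sum_eq_zero fun b _ => ?_
          have hb : (∑ a, M' b a * conj (v a)) = 0 := by
            have := congrFun hM'v b
            simpa [Matrix.mulVec, dotProduct, Pi.star_apply, Complex.star_def] using this
          rw [hb, zero_mul]
  obtain ⟨z, hz⟩ := hvmem
  have hrange : LinearMap.range M'.mulVecLin ≤ LinearMap.range M.mulVecLin := by
    rintro y ⟨x, rfl⟩
    refine ⟨x - ((σ : ℂ) * ∑ b, v b * x b) • z, ?_⟩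
    rw [Matrix.mulVecLin_apply] at hz
    simp only [Matrix.mulVecLin_apply]
    rw [Matrix.mulVec_sub, Matrix.mulVec_smul, hz, hM'def, Matrix.sub_mulVec]
    congr 1
    funext a
    simp only [Matrix.mulVec, dotProduct, Matrix.of_apply, Pi.smul_apply, smul_eq_mul]
    rw [Finset.mul_sum, Finset.sum_mul]
    exact Finset.sum_congr rfl fun b _ => by ring
  have hvmem' : v ∈ LinearMap.range M.mulVecLin := ⟨z, hz⟩
  have hvnot : v ∉ LinearMap.range M'.mulVecLin := by
    rintro ⟨x, hx⟩
    have h1 : braket v (M' *ᵥ x) = 0 := horth x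
    rw [Matrix.mulVecLin_apply] at hx
    rw [hx, hvv] at h1
    exact one_ne_zero h1
  have hlt : LinearMap.range M'.mulVecLin < LinearMap.range M.mulVecLin :=
    lt_of_le_of_ne hrange (fun he => hvnot (by rw [he]; exact hvmem'))
  exact ⟨σ, v, M', hσ, hvv, hM'sym, hdecomp, horth, hrange,
    Submodule.finrank_lt_finrank_of_lt hlt, hvmem'⟩

end TakagiStep
section TakagiInduction

variable {I : Type*} [Fintype I] [DecidableEq I]

lemma takagi_aux (r : ℕ) :
    ∀ (M : Matrix I I ℂ), Mᵀ = M →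
    Module.finrank ℂ (LinearMap.range M.mulVecLin) ≤ r →
    ∃ (k : ℕ) (v : Fin k → I → ℂ) (d : Fin k → ℝ),
      (∀ i j, braket (v i) (v j) = if i = j then 1 else 0) ∧ (∀ i, 0 < d i) ∧
      (∀ i, v i ∈ LinearMap.range M.mulVecLin) ∧
      (∀ a b, M a b = ∑ i, (d i : ℂ) * v i a * v i b) := by
  induction r with
  | zero =>
    intro M hM hr
    have hbot : LinearMap.range M.mulVecLin = ⊥ :=
      Submodule.finrank_eq_zero.mp (Nat.le_zero.mp hr)
    have hMz : M = 0 := by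
      ext a b
      have h1 : M.mulVecLin (Pi.single b 1) ∈ (⊥ : Submodule ℂ (I → ℂ)) := by
        rw [← hbot]
        exact LinearMap.mem_range_self _ _
      have h2 : M *ᵥ Pi.single b 1 = 0 := by
        rw [← Matrix.mulVecLin_apply]
        exact (Submodule.mem_bot ℂ).mp h1
      have h3 := congrFun h2 a
      simpa [Matrix.mulVec_single] using h3
    exact ⟨0, Fin.elim0, Fin.elim0, fun i => i.elim0, fun i => i.elim0, fun i => i.elim0,
      fun a b => by simp [hMz]⟩
  | succ r ih =>
    intro M hM hr
    by_cases h0 : M = 0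
    · exact ⟨0, Fin.elim0, Fin.elim0, fun i => i.elim0, fun i => i.elim0, fun i => i.elim0,
        fun a b => by simp [h0]⟩
    · obtain ⟨σ, v0, M', hσ, hv0, hM'sym, hdec, horth, hle, hlt, hv0mem⟩ := takagi_step hM h0
      obtain ⟨k, v, d, honb, hd, hmem, hsum⟩ :=
        ih M' hM'sym (Nat.lt_succ_iff.mp (lt_of_lt_of_le hlt hr))
      have hcross : ∀ i, braket v0 (v i) = 0 := by
        intro i
        obtain ⟨x, hx⟩ := hmem i
        rw [Matrix.mulVecLin_apply] at hx
        rw [← hx]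
        exact horth x
      refine ⟨k + 1, Fin.cons v0 v, Fin.cons σ d, ?_, ?_, ?_, ?_⟩
      · intro i j
        refine Fin.cases ?_ ?_ i
        · refine Fin.cases ?_ ?_ j
          · simpa [Fin.cons_zero] using hv0
          · intro j'
            simp only [Fin.cons_zero, Fin.cons_succ]
            rw [hcross j', if_neg (Fin.succ_ne_zero j').symm]
        · intro i'
          refine Fin.cases ?_ ?_ j
          · simp only [Fin.cons_zero, Fin.cons_succ]
            rw [braket_comm_conj, hcross i', if_neg (Fin.succ_ne_zero i')]
            simp
          · intro j'
            simp only [Fin.cons_succ]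
            rw [honb i' j']
            by_cases h : i' = j' <;> simp [h, Fin.succ_inj]
      · intro i
        refine Fin.cases ?_ (fun i' => ?_) i
        · simpa [Fin.cons_zero] using hσ
        · simpa [Fin.cons_succ] using hd i'
      · intro i
        refine Fin.cases ?_ (fun i' => ?_) i
        · simpa [Fin.cons_zero] using hv0mem
        · simpa [Fin.cons_succ] using hle (hmem i')
      · intro a b
        rw [hdec a b, Fin.sum_univ_succ]
        simp only [Fin.cons_zero, Fin.cons_succ]
        congr 1
        exact hsum a b

end TakagiInduction
section TakagiFinal

variable {I : Type*} [Fintype I] [DecidableEq I]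

lemma inner_eq_braket (x y : EuclideanSpace ℂ I) :
    (inner ℂ x y : ℂ) = braket ((WithLp.equiv 2 (I → ℂ)) x) ((WithLp.equiv 2 (I → ℂ)) y) := by
  rw [PiLp.inner_apply]
  simp only [RCLike.inner_apply']
  rfl

lemma takagi {M : Matrix I I ℂ} (hM : Mᵀ = M) :
    ∃ (v : I → I → ℂ) (d : I → ℝ), ONB v ∧ (∀ i, 0 ≤ d i) ∧
      (∀ a b, M a b = ∑ i, (d i : ℂ) * v i a * v i b) := by
  obtain ⟨k, v, d, honb, hd, _, hsum⟩ :=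
    takagi_aux (Module.finrank ℂ (LinearMap.range M.mulVecLin)) M hM le_rfl
  have horthE : Orthonormal ℂ (fun i : Fin k => (WithLp.equiv 2 (I → ℂ)).symm (v i)) := by
    rw [orthonormal_iff_ite]
    intro i j
    rw [inner_eq_braket]
    simp only [Equiv.apply_symm_apply]
    rw [honb i j]
  have hk : k ≤ Fintype.card I := by
    have h1 := horthE.linearIndependent
    have h2 := h1.fintype_card_le_finrank
    rwa [Fintype.card_fin, finrank_euclideanSpace] at h2
  obtain ⟨e⟩ : Nonempty (Fin k ↪ I) :=
    Function.Embedding.nonempty_iff_card_le.mpr (by simpa using hk)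
  have einj : Function.Injective e := e.injective
  classical
  set q : I → EuclideanSpace ℂ I := fun j =>
    if h : j ∈ Set.range e then
      (WithLp.equiv 2 (I → ℂ)).symm (v ((Equiv.ofInjective e einj).symm ⟨j, h⟩))
    else 0 with hqdef
  have hq_e : ∀ i : Fin k, q (e i) = (WithLp.equiv 2 (I → ℂ)).symm (v i) := by
    intro i
    rw [hqdef]
    have hmem : (e i : I) ∈ Set.range e := ⟨i, rfl⟩
    dsimp only
    rw [dif_pos hmem]
    exact congrArg _ (congrArg v (Equiv.ofInjective_symm_apply einj i))
  have hrest : Orthonormal ℂ ((Set.range ⇑e).restrict q) := by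
    rw [orthonormal_iff_ite]
    rintro ⟨j1, hj1⟩ ⟨j2, hj2⟩
    obtain ⟨i1, rfl⟩ := Set.mem_range.mp hj1
    obtain ⟨i2, rfl⟩ := Set.mem_range.mp hj2
    show inner ℂ (q (e i1)) (q (e i2)) = _
    rw [hq_e i1, hq_e i2, inner_eq_braket]
    simp only [Equiv.apply_symm_apply]
    rw [honb i1 i2]
    by_cases h : i1 = i2 <;> simp [h, Subtype.ext_iff, einj.eq_iff]
  obtain ⟨b, hb⟩ := hrest.exists_orthonormalBasis_extension_of_card_eq
    (finrank_euclideanSpace (𝕜 := ℂ) (ι := I))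
  refine ⟨fun j => (WithLp.equiv 2 (I → ℂ)) (b j),
    fun j => if h : j ∈ Set.range e then d ((Equiv.ofInjective e einj).symm ⟨j, h⟩) else 0,
    ?_, ?_, ?_⟩
  · intro i j
    rw [← inner_eq_braket]
    exact orthonormal_iff_ite.mp b.orthonormal i j
  · intro j
    by_cases h : j ∈ Set.range ⇑e
    · simp only [dif_pos h]
      exact (hd _).le
    · simp only [dif_neg h]
      exact le_rfl
  · intro a c
    rw [hsum a c]
    symm
    have hcast : ∀ j : I, ((if h : j ∈ Set.range ⇑e
          then d ((Equiv.ofInjective e einj).symm ⟨j, h⟩) else 0 : ℝ) : ℂ)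
        = (if h : j ∈ Set.range ⇑e
          then ((d ((Equiv.ofInjective e einj).symm ⟨j, h⟩) : ℝ) : ℂ) else 0) := by
      intro j
      split <;> simp
    simp only [hcast]
    calc ∑ j : I, ((if h : j ∈ Set.range ⇑e
            then ((d ((Equiv.ofInjective e einj).symm ⟨j, h⟩) : ℝ) : ℂ) else 0))
          * (WithLp.equiv 2 (I → ℂ)) (b j) a * (WithLp.equiv 2 (I → ℂ)) (b j) c
        = ∑ j ∈ Finset.univ.map e, ((if h : j ∈ Set.range ⇑e
            then ((d ((Equiv.ofInjective e einj).symm ⟨j, h⟩) : ℝ) : ℂ) else 0))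
          * (WithLp.equiv 2 (I → ℂ)) (b j) a * (WithLp.equiv 2 (I → ℂ)) (b j) c := by
          refine (Finset.sum_subset (Finset.subset_univ _) ?_).symm
          intro j _ hj
          have hnot : j ∉ Set.range ⇑e := by
            intro hmem
            obtain ⟨i, hi⟩ := hmem
            exact hj (Finset.mem_map.mpr ⟨i, Finset.mem_univ i, hi⟩)
          rw [dif_neg hnot, zero_mul, zero_mul]
      _ = ∑ i : Fin k, ((if h : (e i : I) ∈ Set.range ⇑e
            then ((d ((Equiv.ofInjective e einj).symm ⟨e i, h⟩) : ℝ) : ℂ) else 0))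
          * (WithLp.equiv 2 (I → ℂ)) (b (e i)) a
          * (WithLp.equiv 2 (I → ℂ)) (b (e i)) c := Finset.sum_map _ _ _
      _ = ∑ i : Fin k, (d i : ℂ) * v i a * v i c := by
          refine Finset.sum_congr rfl fun i _ => ?_
          have hmem : (e i : I) ∈ Set.range ⇑e := ⟨i, rfl⟩
          have hbq : b (e i) = q (e i) := hb (e i) hmem
          rw [dif_pos hmem, Equiv.ofInjective_symm_apply einj i, hbq, hq_e i]
          simp only [Equiv.apply_symm_apply]

end TakagiFinal
section Assembly

variable {I : Type*} [Fintype I] [DecidableEq I]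

lemma quad_takagi {M : Matrix I I ℂ} {v : I → I → ℂ} {d : I → ℝ}
    (hM : ∀ a b, M a b = ∑ i, (d i : ℂ) * v i a * v i b) (u : I → ℂ) :
    ∑ a, ∑ b, u a * u b * M a b = ∑ i, (d i : ℂ) * (∑ a, u a * v i a) ^ 2 := by
  calc ∑ a, ∑ b, u a * u b * M a b
      = ∑ a, ∑ b, ∑ i, (d i : ℂ) * (u a * v i a) * (u b * v i b) := by
        refine Finset.sum_congr rfl fun a _ => Finset.sum_congr rfl fun b _ => ?_
        rw [hM a b, Finset.mul_sum]
        exact Finset.sum_congr rfl fun i _ => by ring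
    _ = ∑ i, ∑ a, ∑ b, (d i : ℂ) * (u a * v i a) * (u b * v i b) := by
        calc ∑ a, ∑ b, ∑ i, (d i : ℂ) * (u a * v i a) * (u b * v i b)
            = ∑ a, ∑ i, ∑ b, (d i : ℂ) * (u a * v i a) * (u b * v i b) :=
              Finset.sum_congr rfl fun a _ => Finset.sum_comm
          _ = ∑ i, ∑ a, ∑ b, (d i : ℂ) * (u a * v i a) * (u b * v i b) := Finset.sum_comm
    _ = ∑ i, (d i : ℂ) * (∑ a, u a * v i a) ^ 2 := by
        refine Finset.sum_congr rfl fun i _ => ?_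
        rw [pow_two, Finset.sum_mul_sum, Finset.mul_sum]
        refine Finset.sum_congr rfl fun a _ => ?_
        rw [Finset.mul_sum]
        exact Finset.sum_congr rfl fun b _ => by ring

lemma sum_abs_quad_le {v : I → I → ℂ} {d : I → ℝ} (hv : ONB v) (hd : ∀ i, 0 ≤ d i)
    {b : I → I → ℂ} (hb : ONB b) {M : Matrix I I ℂ}
    (hM : ∀ a c, M a c = ∑ i, (d i : ℂ) * v i a * v i c) :
    ∑ i, ‖(∑ a, ∑ c, b i a * b i c * M a c)‖ ≤ ∑ j, d j := by
  have key : ∀ i, ‖(∑ a, ∑ c, b i a * b i c * M a c)‖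
      ≤ ∑ j, d j * Complex.normSq (∑ a, b i a * v j a) := by
    intro i
    rw [quad_takagi hM]
    refine le_trans (norm_sum_le _ _) (le_of_eq ?_)
    refine Finset.sum_congr rfl fun j _ => ?_
    rw [norm_mul, norm_pow, Complex.norm_real, Real.norm_eq_abs, abs_of_nonneg (hd j),
      Complex.sq_norm]
  have parseval : ∀ j, ∑ i, Complex.normSq (∑ a, b i a * v j a) = 1 := by
    intro j
    have hvj : braket (v j) (v j) = 1 := by
      rw [hv j j, if_pos rfl]
    have h1 := onb_parseval hb hvj
    have h2 : ∑ i, (Complex.normSq (∑ a, b i a * v j a) : ℂ) = 1 := by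
      rw [← h1]
      exact Finset.sum_congr rfl fun i _ => Complex.normSq_eq_conj_mul_self
    exact_mod_cast h2
  calc ∑ i, ‖(∑ a, ∑ c, b i a * b i c * M a c)‖
      ≤ ∑ i, ∑ j, d j * Complex.normSq (∑ a, b i a * v j a) :=
        Finset.sum_le_sum fun i _ => key i
    _ = ∑ j, d j * ∑ i, Complex.normSq (∑ a, b i a * v j a) := by
        rw [Finset.sum_comm]
        exact Finset.sum_congr rfl fun j _ => (Finset.mul_sum _ _ _).symm
    _ = ∑ j, d j := by
        refine Finset.sum_congr rfl fun j _ => ?_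
        rw [parseval j, mul_one]

lemma quad_at_optimal {v : I → I → ℂ} {d : I → ℝ} (hv : ONB v) {M : Matrix I I ℂ}
    (hM : ∀ a c, M a c = ∑ i, (d i : ℂ) * v i a * v i c) (i : I) :
    ∑ a, ∑ c, (star (v i)) a * (star (v i)) c * M a c = (d i : ℂ) := by
  rw [quad_takagi hM]
  have hps : ∀ j, ∑ a, (star (v i)) a * v j a = if i = j then 1 else 0 := by
    intro j
    rw [← hv i j]
    unfold braket
    exact Finset.sum_congr rfl fun a _ => by simp [Pi.star_apply, Complex.star_def]
  have hterm : ∀ j, (d j : ℂ) * (∑ a, (star (v i)) a * v j a) ^ 2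
      = if i = j then (d j : ℂ) else 0 := by
    intro j
    rw [hps j]
    split <;> simp
  simp only [hterm]
  simp [Finset.sum_ite_eq]

lemma trace_psdSqrt_MMH {M : Matrix I I ℂ} {v : I → I → ℂ} {d : I → ℝ} (hv : ONB v)
    (hd : ∀ i, 0 ≤ d i) (hM : ∀ a c, M a c = ∑ i, (d i : ℂ) * v i a * v i c) :
    (psdSqrt (M * Mᴴ)).trace = ((∑ i, d i : ℝ) : ℂ) := by
  set V : Matrix I I ℂ := Matrix.of (fun i a => v i a) with hVdef
  set Wc : Matrix I I ℂ := Matrix.of (fun i a => conj (v i a)) with hWdef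
  set D : Matrix I I ℂ := Matrix.diagonal (fun i => (d i : ℂ)) with hDdef
  have hVV : V * Vᴴ = 1 := onb_rows_mul hv
  have hWV : Wc * Vᵀ = 1 := by
    ext i j
    simp only [Matrix.mul_apply, hWdef, hVdef, Matrix.of_apply, Matrix.transpose_apply]
    rw [show (∑ x, conj (v i x) * v j x) = braket (v i) (v j) from rfl, hv i j,
      Matrix.one_apply]
  have hVtH : (Vᵀ)ᴴ = Wc := by
    ext i a
    simp [hVdef, hWdef, Matrix.conjTranspose_apply, Matrix.transpose_apply, Complex.star_def]
  have hWcH : Wcᴴ = Vᵀ := by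
    ext a i
    simp [hVdef, hWdef, Matrix.conjTranspose_apply, Matrix.transpose_apply, Complex.star_def]
  have hDH : Dᴴ = D := by
    have hstar : (star fun i => ((d i : ℝ) : ℂ)) = fun i => ((d i : ℝ) : ℂ) := by
      funext i
      simp [Pi.star_apply, Complex.star_def, Complex.conj_ofReal]
    rw [hDdef, Matrix.diagonal_conjTranspose, hstar]
  have hMV : M = Vᵀ * D * V := by
    ext a c
    rw [hM a c, Matrix.mul_apply]
    refine Finset.sum_congr rfl fun x _ => ?_
    rw [Matrix.mul_apply, Finset.sum_mul, Finset.sum_eq_single x]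
    · simp only [Matrix.transpose_apply, Matrix.diagonal_apply_eq, hVdef, hDdef, Matrix.of_apply]
      ring
    · intro y _ hyx
      simp only [Matrix.transpose_apply, hVdef, hDdef, Matrix.of_apply,
        Matrix.diagonal_apply_ne _ hyx, mul_zero, zero_mul]
    · intro h
      exact absurd (Finset.mem_univ x) h
  set B : Matrix I I ℂ := Vᵀ * D * Wc with hBdef
  have hMH : Mᴴ = Vᴴ * D * Wc := by
    rw [hMV, Matrix.conjTranspose_mul, Matrix.conjTranspose_mul, hDH, hVtH]
    simp only [Matrix.mul_assoc]
  have hQ : (M * Mᴴ).PosSemidef := Matrix.posSemidef_self_mul_conjTranspose M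
  have hBsq : B ^ 2 = M * Mᴴ := by
    rw [pow_two, hBdef, hMH, hMV]
    calc Vᵀ * D * Wc * (Vᵀ * D * Wc) = Vᵀ * D * (Wc * Vᵀ) * D * Wc := by
          simp only [Matrix.mul_assoc]
      _ = Vᵀ * D * D * Wc := by rw [hWV]; simp only [Matrix.mul_one, Matrix.mul_assoc]
      _ = Vᵀ * D * (V * Vᴴ) * D * Wc := by rw [hVV]; simp only [Matrix.mul_one, Matrix.mul_assoc]
      _ = Vᵀ * D * V * (Vᴴ * D * Wc) := by simp only [Matrix.mul_assoc]
  have hBpsd : B.PosSemidef := by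
    have hDpsd : D.PosSemidef := by
      rw [hDdef]
      refine Matrix.posSemidef_diagonal_iff.mpr fun i => ?_
      rw [Complex.zero_le_real]
      exact hd i
    have : B = Wcᴴ * D * Wc := by rw [hWcH]
    rw [this]
    exact hDpsd.conjTranspose_mul_mul_same Wc
  have hBtr : B.trace = ∑ i, (d i : ℂ) := by
    rw [hBdef, Matrix.trace_mul_cycle, hWV, Matrix.one_mul, hDdef, Matrix.trace_diagonal]
  rw [psdSqrt_of_posSemidef hQ, ← hBpsd.eq_sqrt_of_sq_eq hQ hBsq, hBtr]
  push_cast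
  rfl

lemma trace_psdSqrt_sqrt_swap {S T : Matrix I I ℂ} (hS : S.PosSemidef) (hT : T.PosSemidef) :
    (psdSqrt (psdSqrt S * T * psdSqrt S)).trace
      = (psdSqrt (psdSqrt T * S * psdSqrt T)).trace := by
  rw [psdSqrt_of_posSemidef hS, psdSqrt_of_posSemidef hT]
  have hSH : (hS.sqrt)ᴴ = hS.sqrt := hS.posSemidef_sqrt.1
  have h0 : hS.sqrt * T * hS.sqrt = (hS.sqrt)ᴴ * T * hS.sqrt := by rw [hSH]
  have h1 : hS.sqrt * (hS.sqrt)ᴴ = S := by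
    rw [hSH]
    exact hS.sqrt_mul_self
  rw [h0, trace_psdSqrt_sandwich' (hS.sqrt) hT.posSemidef_sqrt.1 hT.sqrt_mul_self, h1]

end Assembly

/-- For a unit vector `Ψ` in `(ℂ²)^{⊗N_A} ⊗ (ℂ²)^{⊗N_B}` with `N_B` even,
the localizable multipartite entanglement and multipartite entanglement of assistance with the
`N_B`-tangle as seed measure satisfy `L^τ(Ψ) ≤ L^τ_global(Ψ)` and
`L^τ_global(Ψ) = F(Ψ_B, Ψ̃_B)`. -/
theorem tangle_localizable_le_assistance_eq_fidelity
    (NA NB : ℕ) (hNA : 0 < NA) (hNB : 0 < NB) (hEven : Even NB)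
    (Ψ : (Fin NA → Fin 2) × (Fin NB → Fin 2) → ℂ) (hΨ : braket Ψ Ψ = 1) :
    Lloc tangle Ψ ≤ Lglobal tangle Ψ ∧
    Lglobal tangle Ψ = fidelity (ptraceA Ψ) (tildeM (ptraceA Ψ)) := by
  classical
  have hEven' : Even (Fintype.card (Fin NB)) := by simpa using hEven
  have hMsym : (Mmat Ψ)ᵀ = Mmat Ψ := Mmat_transpose hEven' Ψ
  obtain ⟨v, d, hv, hd, hM⟩ := takagi hMsym
  set S : Set ℝ := {r : ℝ | ∃ b : (Fin NA → Fin 2) → (Fin NA → Fin 2) → ℂ,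
    ONB b ∧ r = avgE tangle b Ψ} with hSdef
  have hub : ∀ r ∈ S, r ≤ ∑ j, d j := by
    rintro r ⟨b, hb, rfl⟩
    rw [avgE_tangle_eq]
    exact sum_abs_quad_le hv hd hb hM
  have hbdd : BddAbove S := ⟨∑ j, d j, hub⟩
  have hmem : (∑ j, d j) ∈ S := by
    refine ⟨fun i => star (v i), onb_star hv, ?_⟩
    rw [avgE_tangle_eq]
    symm
    refine Finset.sum_congr rfl fun i _ => ?_
    rw [quad_at_optimal hv hM i, Complex.norm_real, Real.norm_eq_abs, abs_of_nonneg (hd i)]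
  have hLgS : Lglobal tangle Ψ = sSup S := rfl
  have hLg : Lglobal tangle Ψ = ∑ j, d j := by
    rw [hLgS]
    exact le_antisymm (csSup_le ⟨_, hmem⟩ hub) (le_csSup hbdd hmem)
  constructor
  · rw [show Lloc tangle Ψ = sSup {r : ℝ | ∃ q : (Fin NA) → Fin 2 → Fin 2 → ℂ,
      (∀ k, ONB (q k)) ∧ r = avgE tangle (productBasis q) Ψ} from rfl, hLgS]
    apply csSup_le_csSup hbdd
    · exact ⟨avgE tangle (productBasis (fun _ (i x : Fin 2) => if i = x then (1:ℂ) else 0)) Ψ,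
        fun _ (i x : Fin 2) => if i = x then 1 else 0, fun k => onb_std, rfl⟩
    · rintro r ⟨q, hq, rfl⟩
      exact ⟨productBasis q, onb_product q hq, rfl⟩
  · rw [hLg]
    have hρpsd : (ptraceA Ψ).PosSemidef := by
      rw [ptraceA_eq_Amat]
      exact Matrix.posSemidef_self_mul_conjTranspose _
    have hρtpsd : (tildeM (ptraceA Ψ)).PosSemidef :=
      tildeM_posSemidef (conjM_ptraceA_posSemidef Ψ)
    have hchain : (psdSqrt (Mmat Ψ * (Mmat Ψ)ᴴ)).trace
        = (psdSqrt (psdSqrt (ptraceA Ψ) * tildeM (ptraceA Ψ) * psdSqrt (ptraceA Ψ))).trace := by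
      rw [Mmat_mul_conjTranspose, trace_psdSqrt_sandwich (Amat Ψ) hρtpsd, ← ptraceA_eq_Amat,
        trace_psdSqrt_sqrt_swap hρtpsd hρpsd]
    have htr := trace_psdSqrt_MMH hv hd hM
    unfold fidelity
    rw [← hchain, htr, Complex.ofReal_re]

end QIpaper
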